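/- arXiv:2303.17045 — 3 statements merged into one kernel-verified Lean document; each statement's English description precedes it below -/
import Mathlib

section
/- Let s₁ < … < s_ℓ (ℓ ≥ 1) be real slopes and let ε > 0 satisfy 3ε|s₁| ≤ 1 and 3ε|s_ℓ| ≤ 1. Then for every i ∈ {1,…,ℓ}, the levee f_{s_i} fits every labeled data point of the selection gadget, i.e., f_{s_i}(x₁,x₂) = y for every labeled point ((x₁,x₂),y) of the selection gadget. -/
/-- The levee with slope `s`, as a piecewise definition. -/
noncomputable def levee (s x₁ x₂ : ℝ) : ℝ :=
  if 2 ≤ |x₂ - s * x₁| then 0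
  else if |x₂ - s * x₁| ≤ 1 then 1
  else if x₂ - s * x₁ < -1 then 2 + x₂ - s * x₁
  else 2 - x₂ + s * x₁

/-- The selection gadget for `ℓ` slopes `s 0 < s 1 < ⋯ < s (ℓ-1)` and parameter `ε`, as a set of
labeled data points `((x₁, x₂), y)`. -/
noncomputable def selGadget (ℓ : ℕ) (s : ℕ → ℝ) (ε : ℝ) : Set ((ℝ × ℝ) × ℝ) :=
  ({((0, -4), 0), ((0, -3), 0), ((0, -2), 0), ((0, -5/3), 1/3), ((0, -4/3), 2/3),
    ((0, -1), 1), ((0, 0), 1), ((0, 1), 1), ((0, 4/3), 2/3), ((0, 5/3), 1/3),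
    ((0, 2), 0), ((0, 3), 0), ((0, 4), 0)} : Set ((ℝ × ℝ) × ℝ)) ∪
  ({((-ε, -4 - ε * s (ℓ - 1)), 0), ((-ε, -3 - ε * s (ℓ - 1)), 0), ((-ε, -2 - ε * s (ℓ - 1)), 0),
    ((-ε, -1 - ε * s 0), 1), ((-ε, 0), 1), ((-ε, 1 - ε * s (ℓ - 1)), 1),
    ((-ε, 2 - ε * s 0), 0), ((-ε, 3 - ε * s 0), 0), ((-ε, 4 - ε * s 0), 0)} : Set ((ℝ × ℝ) × ℝ)) ∪
  ({((ε, -4 + ε * s 0), 0), ((ε, -3 + ε * s 0), 0), ((ε, -2 + ε * s 0), 0),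
    ((ε, -1 + ε * s (ℓ - 1)), 1), ((ε, 0), 1), ((ε, 1 + ε * s 0), 1),
    ((ε, 2 + ε * s (ℓ - 1)), 0), ((ε, 3 + ε * s (ℓ - 1)), 0),
    ((ε, 4 + ε * s (ℓ - 1)), 0)} : Set ((ℝ × ℝ) × ℝ)) ∪
  {q | ∃ i : ℕ, i + 1 < ℓ ∧
      (q = ((-4 / (s (i + 1) - s i), -2 * (s i + s (i + 1)) / (s (i + 1) - s i)), 0) ∨
       q = ((4 / (s (i + 1) - s i), 2 * (s i + s (i + 1)) / (s (i + 1) - s i)), 0))}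

/-- The selection gadget shifted by offset `z` along the `x₂`-axis. -/
noncomputable def selGadgetOff (ℓ : ℕ) (s : ℕ → ℝ) (ε z : ℝ) : Set ((ℝ × ℝ) × ℝ) :=
  (fun q : (ℝ × ℝ) × ℝ => ((q.1.1, q.1.2 + z), q.2)) '' selGadget ℓ s ε

/-! The levee with slope `s` is a function of the offset `x₂ - s * x₁` from its centre line alone:
a plateau of height `1` for offsets in `[-1, 1]`, linear flanks, and `0` for offsets of size at
least `2`. The central column `x₁ = 0` sees the same profile for every slope. At `x₁ = ±ε` the offset
moves by `ε (s_i - s₁)` or `ε (s_ℓ - s_i)`, both in `[0, 2/3]` because `ε s₁ ≥ -1/3` and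
`ε s_ℓ ≤ 1/3`, which never pushes a point across a breakpoint of the profile. The two points
attached to consecutive slopes `a < b` have offset `±2 (a + b - 2c) / (b - a)` under slope `c`,
of size at least `2` as soon as `c` lies outside `(a, b)`, as every `c = s_i` does. -/

section Levee

variable {s x₁ x₂ : ℝ}

theorem levee_eq_zero (h : 2 ≤ |x₂ - s * x₁|) : levee s x₁ x₂ = 0 :=
  if_pos h

theorem levee_eq_one (h : |x₂ - s * x₁| ≤ 1) : levee s x₁ x₂ = 1 := by
  rw [levee, if_neg (by linarith), if_pos h]

end Levee

theorem le_abs_add_sub_two_mul {a b c : ℝ} (hc : c ≤ a ∨ b ≤ c) : b - a ≤ |a + b - 2 * c| := by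
  rcases hc with hc | hc
  exacts [le_abs'.2 (.inr (by linarith)), le_abs'.2 (.inl (by linarith))]

/-- `(4 / (b - a), 2 * (a + b) / (b - a))` is where the upper edge `x₂ = a * x₁ + 2` of the levee
of slope `a` meets the lower edge `x₂ = b * x₁ - 2` of the levee of slope `b`. -/
theorem levee_eq_zero_at_crossing {a b c : ℝ} (hab : a < b) (hc : c ≤ a ∨ b ≤ c) :
    levee c (4 / (b - a)) (2 * (a + b) / (b - a)) = 0 ∧
      levee c (-4 / (b - a)) (-2 * (a + b) / (b - a)) = 0 := by
  have hd : 0 < b - a := sub_pos.2 hab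
  have hoffset : 2 ≤ |2 * (a + b) / (b - a) - c * (4 / (b - a))| := by
    rw [show 2 * (a + b) / (b - a) - c * (4 / (b - a)) = 2 * (a + b - 2 * c) / (b - a) by ring,
      abs_div, abs_mul, abs_of_pos hd, abs_two, le_div_iff₀ hd]
    linarith [le_abs_add_sub_two_mul hc]
  refine ⟨levee_eq_zero hoffset, levee_eq_zero ?_⟩
  rwa [← abs_neg, show -(-2 * (a + b) / (b - a) - c * (-4 / (b - a)))
    = 2 * (a + b) / (b - a) - c * (4 / (b - a)) by ring]

theorem levee_fits_selGadget_general (ℓ : ℕ) (s : ℕ → ℝ)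
    (hmono : ∀ i, i + 1 < ℓ → s i < s (i + 1))
    (ε : ℝ) (hε : 0 < ε) (hε₁ : 3 * ε * |s 0| ≤ 1) (hε₂ : 3 * ε * |s (ℓ - 1)| ≤ 1)
    (i : ℕ) (hi : i < ℓ) :
    ∀ q ∈ selGadget ℓ s ε, levee (s i) q.1.1 q.1.2 = q.2 := by
  have hs : MonotoneOn s (Set.Iio ℓ) :=
    (strictMonoOn_of_lt_add_one Set.ordConnected_Iio fun j _ _ hj ↦ hmono j hj).monotoneOn
  have hfirst : ε * s 0 ≤ ε * s i :=
    mul_le_mul_of_nonneg_left (hs (i.zero_le.trans_lt hi) hi i.zero_le) hε.le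
  have hlast : ε * s i ≤ ε * s (ℓ - 1) :=
    mul_le_mul_of_nonneg_left (hs hi (Nat.sub_one_lt_of_lt hi) (Nat.le_sub_one_of_lt hi)) hε.le
  have hlow : -1 ≤ 3 * (ε * s 0) := by nlinarith [neg_abs_le (s 0)]
  have hhigh : 3 * (ε * s (ℓ - 1)) ≤ 1 := by nlinarith [le_abs_self (s (ℓ - 1))]
  have hout (j : ℕ) (hj : j + 1 < ℓ) : s i ≤ s j ∨ s (j + 1) ≤ s i :=
    (le_or_gt i j).imp (hs hi (Nat.lt_of_succ_lt hj)) (hs hj hi)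
  simp only [selGadget, Set.mem_union, Set.mem_insert_iff, Set.mem_singleton_iff,
    Set.mem_ofPred_eq, or_imp, forall_and, forall_eq, forall_exists_index, and_imp]
  refine ⟨⟨⟨by norm_num [levee], ?_⟩, ?_⟩,
    fun _ j hj h ↦ h ▸ (levee_eq_zero_at_crossing (hmono j hj) (hout j hj)).2,
    fun _ j hj h ↦ h ▸ (levee_eq_zero_at_crossing (hmono j hj) (hout j hj)).1⟩
  all_goals
    and_intros <;> first
      | exact levee_eq_one (abs_le.2 ⟨by linarith, by linarith⟩)
      | exact levee_eq_zero (le_abs'.2 (.inl (by linarith)))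
      | exact levee_eq_zero (le_abs'.2 (.inr (by linarith)))

/-- Every levee `f_{s i}` fits all labeled data points of the selection gadget. -/
theorem levee_fits_selGadget (ℓ : ℕ) (hℓ : 1 ≤ ℓ) (s : ℕ → ℝ)
    (hmono : ∀ i, i + 1 < ℓ → s i < s (i + 1))
    (ε : ℝ) (hε : 0 < ε) (hε₁ : 3 * ε * |s 0| ≤ 1) (hε₂ : 3 * ε * |s (ℓ - 1)| ≤ 1)
    (i : ℕ) (hi : i < ℓ) :
    ∀ q ∈ selGadget ℓ s ε, levee (s i) q.1.1 q.1.2 = q.2 :=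
  levee_fits_selGadget_general ℓ s hmono ε hε hε₁ hε₂ i hi
end

section
/- Let a₁ < a₂ < … < a₉ be real numbers and let g : ℝ → ℝ be a continuous function that is piecewise linear with at most 4 breakpoints, such that g(a_i) = 0 for i ∈ {1,2,3,7,8,9} and g(a_i) = 1 for i ∈ {4,5,6}. Then g(x) = 0 for all x ≤ a₃ and for all x ≥ a₇, and g(x) = 1 for all x with a₄ ≤ x ≤ a₆. -/
/-!
Write `t₁ ≤ t₂ ≤ t₃ ≤ t₄` for the breakpoints. Values `0, 0, 1, 1` at four points cannot be
matched by two affine pieces, so two breakpoints lie in `(a 1, a 4)` and two in `(a 4, a 7)`.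
The outer pieces therefore contain `a 0, a 1` and `a 7, a 8` and vanish identically. The middle
piece contains `a 4` and is identically `1`: otherwise `a 3` and `a 5` lie on the two ramps next to
it, both of which overshoot `1` at its ends. Finally each ramp is a strictly monotone link between
the levels `0` and `1`, which pins `a 2` and `a 6` to the outer pieces and `a 3`, `a 5` to the
middle one.
-/

/-- `g : ℝ → ℝ` is piecewise linear with at most 4 breakpoints: there are
`t₁ ≤ t₂ ≤ t₃ ≤ t₄` such that `g` restricted to each of the five induced closed intervals
coincides with an affine map. -/
def PiecewiseLinear4 (g : ℝ → ℝ) : Prop :=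
  ∃ t₁ t₂ t₃ t₄ : ℝ, t₁ ≤ t₂ ∧ t₂ ≤ t₃ ∧ t₃ ≤ t₄ ∧
    (∃ a b : ℝ, ∀ x ∈ Set.Iic t₁, g x = a * x + b) ∧
    (∃ a b : ℝ, ∀ x ∈ Set.Icc t₁ t₂, g x = a * x + b) ∧
    (∃ a b : ℝ, ∀ x ∈ Set.Icc t₂ t₃, g x = a * x + b) ∧
    (∃ a b : ℝ, ∀ x ∈ Set.Icc t₃ t₄, g x = a * x + b) ∧
    (∃ a b : ℝ, ∀ x ∈ Set.Ici t₄, g x = a * x + b)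

open Set

def AffineOn (g : ℝ → ℝ) (s : Set ℝ) : Prop :=
  ∃ a b : ℝ, ∀ x ∈ s, g x = a * x + b

namespace AffineOn

variable {g : ℝ → ℝ} {s t : Set ℝ} {x y z : ℝ}

theorem mono (h : AffineOn g s) (hts : t ⊆ s) : AffineOn g t :=
  let ⟨a, b, hab⟩ := h
  ⟨a, b, fun x hx => hab x (hts hx)⟩

theorem eq_of_apply_eq (h : AffineOn g s) (hx : x ∈ s) (hy : y ∈ s) (hxy : x ≠ y)
    (he : g x = g y) : ∀ z ∈ s, g z = g x := by
  obtain ⟨a, b, hab⟩ := h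
  have hslope : a * (x - y) = 0 := by
    rw [hab x hx, hab y hy] at he
    linear_combination he
  have ha : a = 0 := (mul_eq_zero.1 hslope).resolve_right (sub_ne_zero.2 hxy)
  intro z hz
  rw [hab z hz, hab x hx, ha]
  ring

theorem strictMonoOn_of_apply_lt (h : AffineOn g s) (hx : x ∈ s) (hy : y ∈ s) (hxy : x < y)
    (hlt : g x < g y) : StrictMonoOn g s := by
  obtain ⟨a, b, hab⟩ := h
  rw [hab x hx, hab y hy] at hlt
  have ha : 0 < a := by nlinarith
  intro u hu v hv huv
  rw [hab u hu, hab v hv]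
  nlinarith

theorem strictAntiOn_of_apply_lt (h : AffineOn g s) (hx : x ∈ s) (hy : y ∈ s) (hxy : x < y)
    (hlt : g y < g x) : StrictAntiOn g s := by
  obtain ⟨a, b, hab⟩ := h
  rw [hab x hx, hab y hy] at hlt
  have ha : a < 0 := by nlinarith
  intro u hu v hv huv
  rw [hab u hu, hab v hv]
  nlinarith

theorem min_le_apply (h : AffineOn g s) (hx : x ∈ s) (hy : y ∈ s) (hz : z ∈ s) (hxy : x ≤ y)
    (hyz : y ≤ z) : min (g x) (g z) ≤ g y := by
  obtain ⟨a, b, hab⟩ := h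
  rw [hab x hx, hab y hy, hab z hz]
  rcases le_total 0 a with ha | ha
  · exact (min_le_left _ _).trans (by nlinarith)
  · exact (min_le_right _ _).trans (by nlinarith)

end AffineOn

def IsStep (g : ℝ → ℝ) (p s : ℝ) : Prop :=
  ∃ q r, p < q ∧ q < r ∧ r < s ∧ g p = g q ∧ g r = g s ∧ g q ≠ g r

theorem IsStep.not_affineOn_Icc_and_Icc {g : ℝ → ℝ} {p s : ℝ} (h : IsStep g p s) (x : ℝ) :
    ¬(AffineOn g (Icc p x) ∧ AffineOn g (Icc x s)) := by
  rintro ⟨hleft, hright⟩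
  obtain ⟨q, r, hpq, hqr, hrs, hp, hs, hne⟩ := h
  have hrs_const (hx : x ≤ r) : ∀ z ∈ Icc x s, g z = g r :=
    hright.eq_of_apply_eq ⟨hx, hrs.le⟩ ⟨hx.trans hrs.le, le_rfl⟩ hrs.ne hs
  rcases lt_or_ge x q with hxq | hqx
  · exact hne (hrs_const (hxq.trans hqr).le q ⟨hxq.le, (hqr.trans hrs).le⟩)
  have hpq_const : ∀ z ∈ Icc p x, g z = g p :=
    hleft.eq_of_apply_eq ⟨le_rfl, hpq.le.trans hqx⟩ ⟨hpq.le, hqx⟩ hpq.ne hp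
  rcases le_or_gt x r with hxr | hrx
  · have hgx : g x = g p := hpq_const x ⟨hpq.le.trans hqx, le_rfl⟩
    exact hne (by rw [← hp, ← hgx, hrs_const hxr x ⟨le_rfl, hxr.trans hrs.le⟩])
  · exact hne (by rw [← hp, hpq_const r ⟨(hpq.trans hqr).le, hrx.le⟩])

structure IsBreakpoints (g : ℝ → ℝ) (t₁ t₂ t₃ t₄ : ℝ) : Prop where
  le₁₂ : t₁ ≤ t₂
  le₂₃ : t₂ ≤ t₃
  le₃₄ : t₃ ≤ t₄
  affineOn_Iic : AffineOn g (Iic t₁)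
  affineOn_Icc₁₂ : AffineOn g (Icc t₁ t₂)
  affineOn_Icc₂₃ : AffineOn g (Icc t₂ t₃)
  affineOn_Icc₃₄ : AffineOn g (Icc t₃ t₄)
  affineOn_Ici : AffineOn g (Ici t₄)

namespace IsBreakpoints

variable {g : ℝ → ℝ} {t₁ t₂ t₃ t₄ c d : ℝ}

theorem breakpoints_within_steps (hg : IsBreakpoints g t₁ t₂ t₃ t₄) {p m s : ℝ}
    (h₁ : IsStep g p m) (h₂ : IsStep g m s) : p < t₁ ∧ t₂ < m ∧ m < t₃ ∧ t₄ < s := by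
  have ht₂ : t₂ < m := lt_of_not_ge fun hm => h₁.not_affineOn_Icc_and_Icc t₁
    ⟨hg.affineOn_Iic.mono fun _ hx => hx.2, hg.affineOn_Icc₁₂.mono (Icc_subset_Icc_right hm)⟩
  have ht₃ : m < t₃ := lt_of_not_ge fun hm => h₂.not_affineOn_Icc_and_Icc t₄
    ⟨hg.affineOn_Icc₃₄.mono (Icc_subset_Icc_left hm), hg.affineOn_Ici.mono fun _ hx => hx.1⟩
  have ht₁ : p < t₁ := lt_of_not_ge fun hp => h₁.not_affineOn_Icc_and_Icc t₂
    ⟨hg.affineOn_Icc₁₂.mono (Icc_subset_Icc_left hp),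
      hg.affineOn_Icc₂₃.mono (Icc_subset_Icc_right ht₃.le)⟩
  have ht₄ : t₄ < s := lt_of_not_ge fun hs => h₂.not_affineOn_Icc_and_Icc t₃
    ⟨hg.affineOn_Icc₂₃.mono (Icc_subset_Icc_left ht₂.le),
      hg.affineOn_Icc₃₄.mono (Icc_subset_Icc_right hs)⟩
  exact ⟨ht₁, ht₂, ht₃, ht₄⟩

theorem apply_eq_of_mem_middle (hg : IsBreakpoints g t₁ t₂ t₃ t₄) (hcd : c < d)
    (h₀ : ∀ x ∈ Iic t₁, g x = c) (h₄ : ∀ x ∈ Ici t₄, g x = c) {q m r : ℝ} (hqm : q < m)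
    (hmr : m < r) (hq : g q = d) (hm : g m = d) (hr : g r = d) (hm₂ : t₂ ≤ m) (hm₃ : m ≤ t₃) :
    ∀ x ∈ Icc t₂ t₃, g x = d := by
  by_cases hq₂ : t₂ ≤ q
  · intro x hx
    rw [hg.affineOn_Icc₂₃.eq_of_apply_eq ⟨hq₂, hqm.le.trans hm₃⟩ ⟨hm₂, hm₃⟩ hqm.ne
      (hq.trans hm.symm) x hx, hq]
  by_cases hr₃ : r ≤ t₃
  · intro x hx
    rw [hg.affineOn_Icc₂₃.eq_of_apply_eq ⟨hm₂.trans hmr.le, hr₃⟩ ⟨hm₂, hm₃⟩ hmr.ne'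
      (hr.trans hm.symm) x hx, hr]
  -- `q` and `r` lie on the ramps next to the middle piece, which both climb above `d`.
  push Not at hq₂ hr₃
  have hq₁ : t₁ < q := lt_of_not_ge fun h => (hcd.trans_eq hq.symm).ne' (h₀ q h)
  have hr₄ : r < t₄ := lt_of_not_ge fun h => (hcd.trans_eq hr.symm).ne' (h₄ r h)
  have hgt₂ : d < g t₂ := by
    have hmono := hg.affineOn_Icc₁₂.strictMonoOn_of_apply_lt ⟨le_rfl, hg.le₁₂⟩
      ⟨hq₁.le, hq₂.le⟩ hq₁ (by rw [h₀ t₁ self_mem_Iic, hq]; exact hcd)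
    exact hq ▸ hmono ⟨hq₁.le, hq₂.le⟩ ⟨hg.le₁₂, le_rfl⟩ hq₂
  have hgt₃ : d < g t₃ := by
    have hanti := hg.affineOn_Icc₃₄.strictAntiOn_of_apply_lt ⟨hr₃.le, hr₄.le⟩
      ⟨hg.le₃₄, le_rfl⟩ hr₄ (by rw [h₄ t₄ self_mem_Ici, hr]; exact hcd)
    exact hr ▸ hanti ⟨le_rfl, hg.le₃₄⟩ ⟨hr₃.le, hr₄.le⟩ hr₃
  have hmin := hg.affineOn_Icc₂₃.min_le_apply ⟨le_rfl, hg.le₂₃⟩ ⟨hm₂, hm₃⟩ ⟨hg.le₂₃, le_rfl⟩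
    hm₂ hm₃
  exact absurd (hm ▸ hmin) (not_le.2 (lt_min hgt₂ hgt₃))

theorem le_first_of_apply_eq (hg : IsBreakpoints g t₁ t₂ t₃ t₄) (hcd : c ≠ d)
    (h₀ : ∀ x ∈ Iic t₁, g x = c) (h₂₃ : ∀ x ∈ Icc t₂ t₃, g x = d) {y : ℝ} (hy : g y = c)
    (hy₃ : y ≤ t₃) : y ≤ t₁ := by
  by_contra! hy₁
  rcases le_or_gt y t₂ with hy₂ | hy₂
  · have hconst := hg.affineOn_Icc₁₂.eq_of_apply_eq ⟨le_rfl, hg.le₁₂⟩ ⟨hy₁.le, hy₂⟩ hy₁.ne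
      ((h₀ t₁ self_mem_Iic).trans hy.symm) t₂ ⟨hg.le₁₂, le_rfl⟩
    exact hcd ((h₀ t₁ self_mem_Iic).symm.trans (hconst.symm.trans (h₂₃ t₂ ⟨le_rfl, hg.le₂₃⟩)))
  · exact hcd (hy.symm.trans (h₂₃ y ⟨hy₂.le, hy₃⟩))

theorem second_le_of_apply_eq (hg : IsBreakpoints g t₁ t₂ t₃ t₄) (hcd : c ≠ d)
    (h₀ : ∀ x ∈ Iic t₁, g x = c) (h₂₃ : ∀ x ∈ Icc t₂ t₃, g x = d) {y : ℝ} (hy : g y = d) :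
    t₂ ≤ y := by
  by_contra! hy₂
  rcases le_or_gt y t₁ with hy₁ | hy₁
  · exact hcd ((h₀ y hy₁).symm.trans hy)
  · have hconst := hg.affineOn_Icc₁₂.eq_of_apply_eq ⟨hy₁.le, hy₂.le⟩ ⟨hg.le₁₂, le_rfl⟩ hy₂.ne
      (hy.trans (h₂₃ t₂ ⟨le_rfl, hg.le₂₃⟩).symm) t₁ ⟨le_rfl, hg.le₁₂⟩
    exact hcd ((h₀ t₁ self_mem_Iic).symm.trans (hconst.trans hy))

theorem fourth_le_of_apply_eq (hg : IsBreakpoints g t₁ t₂ t₃ t₄) (hcd : c ≠ d)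
    (h₄ : ∀ x ∈ Ici t₄, g x = c) (h₂₃ : ∀ x ∈ Icc t₂ t₃, g x = d) {y : ℝ} (hy : g y = c)
    (hy₂ : t₂ ≤ y) : t₄ ≤ y := by
  by_contra! hy₄
  rcases le_or_gt t₃ y with hy₃ | hy₃
  · have hconst := hg.affineOn_Icc₃₄.eq_of_apply_eq ⟨hy₃, hy₄.le⟩ ⟨hg.le₃₄, le_rfl⟩ hy₄.ne
      (hy.trans (h₄ t₄ self_mem_Ici).symm) t₃ ⟨le_rfl, hg.le₃₄⟩
    exact hcd (hy.symm.trans (hconst.symm.trans (h₂₃ t₃ ⟨hg.le₂₃, le_rfl⟩)))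
  · exact hcd (hy.symm.trans (h₂₃ y ⟨hy₂, hy₃.le⟩))

theorem le_third_of_apply_eq (hg : IsBreakpoints g t₁ t₂ t₃ t₄) (hcd : c ≠ d)
    (h₄ : ∀ x ∈ Ici t₄, g x = c) (h₂₃ : ∀ x ∈ Icc t₂ t₃, g x = d) {y : ℝ} (hy : g y = d) :
    y ≤ t₃ := by
  by_contra! hy₃
  rcases le_or_gt t₄ y with hy₄ | hy₄
  · exact hcd ((h₄ y hy₄).symm.trans hy)
  · have hconst := hg.affineOn_Icc₃₄.eq_of_apply_eq ⟨le_rfl, hg.le₃₄⟩ ⟨hy₃.le, hy₄.le⟩ hy₃.ne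
      ((h₂₃ t₃ ⟨hg.le₂₃, le_rfl⟩).trans hy.symm) t₄ ⟨hg.le₃₄, le_rfl⟩
    exact hcd ((h₄ t₄ self_mem_Ici).symm.trans (hconst.trans (h₂₃ t₃ ⟨hg.le₂₃, le_rfl⟩)))

end IsBreakpoints

theorem nine_points_force_levee_shape_general (a : Fin 9 → ℝ) (ha : StrictMono a)
    (g : ℝ → ℝ) (hpl : PiecewiseLinear4 g)
    (h₁ : g (a 0) = 0) (h₂ : g (a 1) = 0) (h₃ : g (a 2) = 0)
    (h₄ : g (a 3) = 1) (h₅ : g (a 4) = 1) (h₆ : g (a 5) = 1)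
    (h₇ : g (a 6) = 0) (h₈ : g (a 7) = 0) (h₉ : g (a 8) = 0) :
    (∀ x : ℝ, x ≤ a 2 → g x = 0) ∧ (∀ x : ℝ, a 6 ≤ x → g x = 0) ∧
    (∀ x : ℝ, a 3 ≤ x → x ≤ a 5 → g x = 1) := by
  obtain ⟨t₁, t₂, t₃, t₄, h₁₂, h₂₃, h₃₄, hI₀, hI₁, hI₂, hI₃, hI₄⟩ := hpl
  have hg : IsBreakpoints g t₁ t₂ t₃ t₄ := ⟨h₁₂, h₂₃, h₃₄, hI₀, hI₁, hI₂, hI₃, hI₄⟩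
  have hlt {i j : Fin 9} (hij : i < j := by decide) : a i < a j := ha hij
  have hup : IsStep g (a 1) (a 4) :=
    ⟨a 2, a 3, hlt, hlt, hlt, h₂.trans h₃.symm, h₄.trans h₅.symm, by rw [h₃, h₄]; norm_num⟩
  have hdown : IsStep g (a 4) (a 7) :=
    ⟨a 5, a 6, hlt, hlt, hlt, h₅.trans h₆.symm, h₇.trans h₈.symm, by rw [h₆, h₇]; norm_num⟩
  obtain ⟨ht₁, ht₂, ht₃, ht₄⟩ := hg.breakpoints_within_steps hup hdown
  have hleft : ∀ x ∈ Iic t₁, g x = 0 := fun x hx => (hg.affineOn_Iic.eq_of_apply_eq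
    ((hlt : a 0 < a 1).trans ht₁).le ht₁.le (hlt : a 0 < a 1).ne (h₁.trans h₂.symm) x hx).trans h₁
  have hright : ∀ x ∈ Ici t₄, g x = 0 := fun x hx => (hg.affineOn_Ici.eq_of_apply_eq
    ht₄.le (ht₄.trans (hlt : a 7 < a 8)).le (hlt : a 7 < a 8).ne (h₈.trans h₉.symm) x hx).trans h₈
  have hmiddle : ∀ x ∈ Icc t₂ t₃, g x = 1 :=
    hg.apply_eq_of_mem_middle one_pos hleft hright hlt hlt h₄ h₅ h₆ ht₂.le ht₃.le
  refine ⟨fun x hx => hleft x (hx.trans ?_), fun x hx => hright x (le_trans ?_ hx),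
    fun x hx₃ hx₅ => hmiddle x ⟨le_trans ?_ hx₃, hx₅.trans ?_⟩⟩
  · exact hg.le_first_of_apply_eq zero_ne_one hleft hmiddle h₃ ((hlt : a 2 < a 4).trans ht₃).le
  · exact hg.fourth_le_of_apply_eq zero_ne_one hright hmiddle h₇ (ht₂.trans (hlt : a 4 < a 6)).le
  · exact hg.second_le_of_apply_eq zero_ne_one hleft hmiddle h₄
  · exact hg.le_third_of_apply_eq zero_ne_one hright hmiddle h₆

/-- Nine labeled points with label pattern `0,0,0,1,1,1,0,0,0` force a continuous piecewise linear
function with at most 4 breakpoints to be `0` before the third point and after the seventh point,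
and to be `1` between the fourth and the sixth point. -/
theorem nine_points_force_levee_shape (a : Fin 9 → ℝ) (ha : StrictMono a)
    (g : ℝ → ℝ) (hg : Continuous g) (hpl : PiecewiseLinear4 g)
    (h₁ : g (a 0) = 0) (h₂ : g (a 1) = 0) (h₃ : g (a 2) = 0)
    (h₄ : g (a 3) = 1) (h₅ : g (a 4) = 1) (h₆ : g (a 5) = 1)
    (h₇ : g (a 6) = 0) (h₈ : g (a 7) = 0) (h₉ : g (a 8) = 0) :
    (∀ x : ℝ, x ≤ a 2 → g x = 0) ∧ (∀ x : ℝ, a 6 ≤ x → g x = 0) ∧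
    (∀ x : ℝ, a 3 ≤ x → x ≤ a 5 → g x = 1) :=
  nine_points_force_levee_shape_general a ha g hpl h₁ h₂ h₃ h₄ h₅ h₆ h₇ h₈ h₉
end

section
/- Consider m selection gadgets with offsets z₁ < … < z_m, where the j-th gadget has ℓ_j ≥ 2 slopes s₁^{(j)} < … < s_{ℓ_j}^{(j)}, all gadgets use the same parameter ε > 0 satisfying 3ε|s₁^{(j)}| ≤ 1 and 3ε|s_{ℓ_j}^{(j)}| ≤ 1 for every j. Let δ = min over j and i of (s_{i+1}^{(j)} − s_i^{(j)}) and S = max over j and i of |s_i^{(j)}|. If z_{j+1} − z_j ≥ 8S/δ + 6 for all j ∈ {1,…,m−1}, then for all j ≠ j' in {1,…,m}, every i ∈ {1,…,ℓ_j}, and every labeled data point ((x̄₁,x̄₂), y) of the gadget with offset z_{j'}, the shifted levee of gadget j vanishes there: f_{s_i^{(j)}}(x̄₁, x̄₂ − z_j) = 0. -/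
/-!
For any slope `σ` with `|σ| ≤ S` and `3ε|σ| ≤ 1`, every data point `(x₁, x₂)` of a selection gadget
satisfies `|x₂ - σ x₁| ≤ 8S/δ + 4`: the points on the lines `x₁ ∈ {0, ±ε}` give at most
`4 + 2/3 ≤ 8S/δ + 4` (as `δ ≤ 2S`), and the two points attached to a gap `s_{i+1} - s_i ≥ δ` give
`|2(s_i + s_{i+1}) - 4σ| / (s_{i+1} - s_i) ≤ 8S/δ`. Every slope of a gadget qualifies, since slopes
are increasing and the constraint `3ε|·| ≤ 1` holds at both ends. Two different gadgets have
offsets at least `8S/δ + 6` apart, so at a point of one gadget the argument of a levee of the other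
has absolute value at least `2`, where the levee vanishes.
-/
open Set

lemma levee_eq_zero_of_two_le_abs {s x₁ x₂ : ℝ} (h : 2 ≤ |x₂ - s * x₁|) : levee s x₁ x₂ = 0 :=
  if_pos h

lemma mul_abs_le_one_of_lt_succ {s : ℕ → ℝ} {n i : ℕ} {c : ℝ} (hc : 0 ≤ c)
    (hmono : ∀ k, k < n → s k < s (k + 1)) (hi : i ≤ n)
    (h₀ : c * |s 0| ≤ 1) (hn : c * |s n| ≤ 1) : c * |s i| ≤ 1 := by
  have hs : StrictMonoOn s (Iic n) := strictMonoOn_Iic_of_lt_succ hmono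
  have hi_abs : |s i| ≤ max |s 0| |s n| :=
    abs_le_max_abs_abs (hs.monotoneOn (Nat.zero_le n) hi (Nat.zero_le i))
      (hs.monotoneOn hi (le_refl n) hi)
  calc c * |s i| ≤ c * max |s 0| |s n| := by gcongr
    _ ≤ 1 := by rcases max_choice |s 0| |s n| with h | h <;> rw [h] <;> assumption

lemma le_sub_of_forall_le_sub_succ {z : ℕ → ℝ} {m : ℕ} {c : ℝ} (hc : 0 ≤ c)
    (h : ∀ j, j + 1 < m → c ≤ z (j + 1) - z j) {a b : ℕ} (hab : a < b) (hb : b < m) :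
    c ≤ z b - z a := by
  induction b, hab using Nat.le_induction with
  | base => exact h a hb
  | succ b hab ih => linarith [ih (by omega), h b hb]

lemma le_abs_sub_of_forall_le_sub_succ {z : ℕ → ℝ} {m : ℕ} {c : ℝ} (hc : 0 ≤ c)
    (h : ∀ j, j + 1 < m → c ≤ z (j + 1) - z j) {a b : ℕ} (hab : a ≠ b) (ha : a < m)
    (hb : b < m) : c ≤ |z a - z b| := by
  rcases hab.lt_or_gt with hab | hab
  · rw [abs_sub_comm]
    exact (le_sub_of_forall_le_sub_succ hc h hab hb).trans (le_abs_self _)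
  · exact (le_sub_of_forall_le_sub_succ hc h hab ha).trans (le_abs_self _)

lemma abs_sub_mul_gap_point_le {a b σ S δ : ℝ} (ha : |a| ≤ S) (hb : |b| ≤ S) (hσ : |σ| ≤ S)
    (hδ : 0 < δ) (hab : δ ≤ b - a) :
    |2 * (a + b) / (b - a) - σ * (4 / (b - a))| ≤ 8 * S / δ := by
  have hba : 0 < b - a := hδ.trans_le hab
  have hnum : |2 * (a + b) - 4 * σ| ≤ 8 * S := by
    rw [abs_le] at ha hb hσ ⊢
    constructor <;> linarith
  calc |2 * (a + b) / (b - a) - σ * (4 / (b - a))| = |2 * (a + b) - 4 * σ| / (b - a) := by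
        rw [← abs_of_pos hba, ← abs_div, abs_of_pos hba]; ring_nf
    _ ≤ 8 * S / (b - a) := by gcongr
    _ ≤ 8 * S / δ := by gcongr; linarith [abs_nonneg σ]

lemma abs_sub_mul_le_of_mem_selGadget {ℓ : ℕ} {s : ℕ → ℝ} {ε σ S δ : ℝ} (hε : 0 ≤ ε)
    (hs₀ : 3 * ε * |s 0| ≤ 1) (hsℓ : 3 * ε * |s (ℓ - 1)| ≤ 1) (hσε : 3 * ε * |σ| ≤ 1)
    (hσS : |σ| ≤ S) (hsS : ∀ i, i < ℓ → |s i| ≤ S) (hδ : 0 < δ)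
    (hgap : ∀ i, i + 1 < ℓ → δ ≤ s (i + 1) - s i) (hδS : δ ≤ 8 * S)
    {q : (ℝ × ℝ) × ℝ} (hq : q ∈ selGadget ℓ s ε) : |q.1.2 - σ * q.1.1| ≤ 8 * S / δ + 4 := by
  have hSδ : 1 ≤ 8 * S / δ := (one_le_div hδ).2 hδS
  have eps_mul_le {t : ℝ} (ht : 3 * ε * |t| ≤ 1) : |ε * t| ≤ 1 / 3 := by
    rw [abs_mul, abs_of_nonneg hε]; linarith
  obtain ⟨h₀, h₀'⟩ := abs_le.1 (eps_mul_le hs₀)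
  obtain ⟨hℓ, hℓ'⟩ := abs_le.1 (eps_mul_le hsℓ)
  obtain ⟨hσ, hσ'⟩ := abs_le.1 (eps_mul_le hσε)
  simp only [selGadget, mem_union, mem_insert_iff, mem_singleton_iff, mem_ofPred_eq] at hq
  rcases hq with ((h | h) | h) | ⟨i, hi, h | h⟩
  · rcases h with h|h|h|h|h|h|h|h|h|h|h|h|h <;> subst h <;> rw [abs_le] <;> constructor <;> linarith
  · rcases h with h|h|h|h|h|h|h|h|h <;> subst h <;> rw [abs_le] <;> constructor <;> linarith
  · rcases h with h|h|h|h|h|h|h|h|h <;> subst h <;> rw [abs_le] <;> constructor <;> linarith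
  · subst h
    rw [show ∀ u v : ℝ, -2 * u / v - σ * (-4 / v) = -(2 * u / v - σ * (4 / v)) by intros; ring,
      abs_neg]
    linarith [abs_sub_mul_gap_point_le (hsS i (by omega)) (hsS (i + 1) hi) hσS hδ (hgap i hi)]
  · subst h
    linarith [abs_sub_mul_gap_point_le (hsS i (by omega)) (hsS (i + 1) hi) hσS hδ (hgap i hi)]

theorem levee_vanishes_on_other_gadgets_general (m : ℕ) (z : ℕ → ℝ)
    (ℓ : ℕ → ℕ)
    (s : ℕ → ℕ → ℝ) (hmono : ∀ j, j < m → ∀ i, i + 1 < ℓ j → s j i < s j (i + 1))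
    (ε : ℝ) (hε : 0 < ε)
    (hε₁ : ∀ j, j < m → 3 * ε * |s j 0| ≤ 1) (hε₂ : ∀ j, j < m → 3 * ε * |s j (ℓ j - 1)| ≤ 1)
    (δ S : ℝ)
    (hδ : IsLeast {x : ℝ | ∃ j, j < m ∧ ∃ i, i + 1 < ℓ j ∧ x = s j (i + 1) - s j i} δ)
    (hS : IsGreatest {x : ℝ | ∃ j, j < m ∧ ∃ i, i < ℓ j ∧ x = |s j i|} S)
    (hz : ∀ j, j + 1 < m → 8 * S / δ + 6 ≤ z (j + 1) - z j) :
    ∀ j j', j < m → j' < m → j ≠ j' → ∀ i, i < ℓ j →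
      ∀ q ∈ selGadgetOff (ℓ j') (s j') ε (z j'),
        levee (s j i) q.1.1 (q.1.2 - z j) = 0 := by
  intro j j' hj hj' hne i hi q ⟨p, hp, hq⟩
  subst hq
  have hsS : ∀ j, j < m → ∀ i, i < ℓ j → |s j i| ≤ S := fun j hj i hi => hS.2 ⟨j, hj, i, hi, rfl⟩
  obtain ⟨j₀, hj₀, i₀, hi₀, rfl⟩ := hδ.1
  have hδ_pos : 0 < s j₀ (i₀ + 1) - s j₀ i₀ := sub_pos.2 (hmono j₀ hj₀ i₀ hi₀)
  have hδ_le : s j₀ (i₀ + 1) - s j₀ i₀ ≤ 8 * S := by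
    have h₁ := abs_le.1 (hsS j₀ hj₀ i₀ (by omega))
    have h₂ := abs_le.1 (hsS j₀ hj₀ (i₀ + 1) hi₀)
    linarith [abs_nonneg (s j₀ i₀)]
  have hσε : 3 * ε * |s j i| ≤ 1 :=
    mul_abs_le_one_of_lt_succ (by positivity) (fun k hk => hmono j hj k (by omega))
      (by omega) (hε₁ j hj) (hε₂ j hj)
  have hp_le := abs_sub_mul_le_of_mem_selGadget hε.le (hε₁ j' hj') (hε₂ j' hj') hσε
    (hsS j hj i hi) (hsS j' hj') hδ_pos (fun k hk => hδ.2 ⟨j', hj', k, hk, rfl⟩) hδ_le hp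
  have hS_nonneg : 0 ≤ S := (abs_nonneg _).trans (hsS j₀ hj₀ i₀ (by omega))
  have hsep := le_abs_sub_of_forall_le_sub_succ (by positivity) hz hne.symm hj' hj
  apply levee_eq_zero_of_two_le_abs
  calc (2 : ℝ) ≤ |z j' - z j| - |p.1.2 - s j i * p.1.1| := by linarith
    _ ≤ |(z j' - z j) + (p.1.2 - s j i * p.1.1)| := abs_sub_abs_le_abs_add _ _
    _ = |p.1.2 + z j' - z j - s j i * p.1.1| := by ring_nf

/-- For sufficiently separated selection gadgets, each levee of one gadget vanishes at every data
point of every other gadget. -/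
theorem levee_vanishes_on_other_gadgets (m : ℕ) (hm : 1 ≤ m) (z : ℕ → ℝ)
    (hzmono : ∀ j, j + 1 < m → z j < z (j + 1))
    (ℓ : ℕ → ℕ) (hℓ : ∀ j, j < m → 2 ≤ ℓ j)
    (s : ℕ → ℕ → ℝ) (hmono : ∀ j, j < m → ∀ i, i + 1 < ℓ j → s j i < s j (i + 1))
    (ε : ℝ) (hε : 0 < ε)
    (hε₁ : ∀ j, j < m → 3 * ε * |s j 0| ≤ 1) (hε₂ : ∀ j, j < m → 3 * ε * |s j (ℓ j - 1)| ≤ 1)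
    (δ S : ℝ)
    (hδ : IsLeast {x : ℝ | ∃ j, j < m ∧ ∃ i, i + 1 < ℓ j ∧ x = s j (i + 1) - s j i} δ)
    (hS : IsGreatest {x : ℝ | ∃ j, j < m ∧ ∃ i, i < ℓ j ∧ x = |s j i|} S)
    (hz : ∀ j, j + 1 < m → 8 * S / δ + 6 ≤ z (j + 1) - z j) :
    ∀ j j', j < m → j' < m → j ≠ j' → ∀ i, i < ℓ j →
      ∀ q ∈ selGadgetOff (ℓ j') (s j') ε (z j'),
        levee (s j i) q.1.1 (q.1.2 - z j) = 0 :=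
  levee_vanishes_on_other_gadgets_general m z ℓ s hmono ε hε hε₁ hε₂ δ S hδ hS hz
end
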